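/- arXiv:1804.05890 — 3 statements merged into one kernel-verified Lean document; each statement's English description precedes it below -/
import Mathlib

section
/- Let β > 0 and r ≥ 1 an integer with β·r > 1, let t_min > 0, τ_est ≥ 0 and D be such that t_min ≤ D − τ_est. Let Y be a Pareto(D, β) random variable and X_2, ..., X_{r+1} be Pareto(t_min, β) random variables, all mutually independent. Then E[ min(Y − τ_est, X_2, ..., X_{r+1}) ] = t_min/(β·r − 1) − t_min^{β·r}/((β·r − 1)·(D − τ_est)^{β·r − 1}) + ∫_{D−τ_est}^{∞} (D/(ω + τ_est))^β · (t_min/ω)^{β·r} dω + t_min. -/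
open MeasureTheory ProbabilityTheory Set

/-- A real random variable `X` is Pareto(`tmin`, `β`): `P(X > t) = (tmin/t)^β` for `t ≥ tmin`
and `P(X > t) = 1` for `t < tmin`. -/
def IsPareto {Ω : Type*} [MeasurableSpace Ω] (μ : Measure Ω) (X : Ω → ℝ)
    (tmin β : ℝ) : Prop :=
  Measurable X ∧
    (∀ t : ℝ, tmin ≤ t → μ {ω | t < X ω} = ENNReal.ofReal ((tmin / t) ^ β)) ∧
    (∀ t : ℝ, t < tmin → μ {ω | t < X ω} = 1)

/-! By independence, `P(min(Y - τ, X₁, …, X_r) > t) = P(Y > t + τ) · ∏ₖ P(Xₖ > t)`, and the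
product is the tail of a Pareto(`tmin`, `βr`) law. Writing the expectation of this nonnegative
minimum as `∫₀^∞ P(· > t) dt` and splitting at `tmin` and `D - τ`: the tail is `1` below `tmin`,
it is `(tmin/t)^{βr}` between `tmin` and `D - τ` (integrated in closed form, using `βr > 1`), and
beyond `D - τ` both factors contribute, which is the remaining integral. -/

lemma lt_ciInf_iff_of_finite {ι : Type*} [Finite ι] [Nonempty ι] {f : ι → ℝ} {a : ℝ} :
    a < ⨅ i, f i ↔ ∀ i, a < f i := by
  refine ⟨fun h i => h.trans_le (ciInf_le (finite_range f).bddBelow i), fun h => ?_⟩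
  obtain ⟨i, hi⟩ := exists_eq_ciInf_of_finite (f := f)
  exact hi ▸ h i

lemma div_rpow_eq_mul_rpow_neg {a x : ℝ} (ha : 0 ≤ a) (hx : 0 ≤ x) (p : ℝ) :
    (a / x) ^ p = a ^ p * x ^ (-p) := by
  rw [Real.div_rpow ha hx, Real.rpow_neg hx, div_eq_mul_inv]

lemma integral_Ioc_div_rpow {a b p : ℝ} (ha : 0 < a) (hab : a ≤ b) (hp : p ≠ 1) :
    ∫ t in Ioc a b, (a / t) ^ p = a / (p - 1) - a ^ p / ((p - 1) * b ^ (p - 1)) := by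
  have hb : 0 < b := ha.trans_le hab
  have hp' : p - 1 ≠ 0 := sub_ne_zero.2 hp
  rw [← intervalIntegral.integral_of_le hab,
    intervalIntegral.integral_congr (g := fun t => a ^ p * t ^ (-p)) fun t ht =>
      div_rpow_eq_mul_rpow_neg ha.le (ha.trans_le (uIcc_of_le hab ▸ ht).1).le p,
    intervalIntegral.integral_const_mul, integral_rpow (Or.inr ⟨by contrapose! hp; linarith,
      fun h => (uIcc_of_le hab ▸ h).1.not_gt ha⟩)]
  have hb' : b ^ (-p + 1) = (b ^ (p - 1))⁻¹ := by
    rw [show -p + 1 = -(p - 1) by ring, Real.rpow_neg hb.le]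
  have ha' : a ^ p * a ^ (-p + 1) = a := by
    rw [← Real.rpow_add ha, add_neg_cancel_left, Real.rpow_one]
  rw [hb', mul_div_assoc', mul_sub, ha', show -p + 1 = -(p - 1) by ring]
  field_simp
  ring

noncomputable def paretoTail (tmin β t : ℝ) : ℝ :=
  if t ≤ tmin then 1 else (tmin / t) ^ β

section ParetoTail

variable {tmin β t : ℝ}

lemma paretoTail_of_le (h : t ≤ tmin) : paretoTail tmin β t = 1 := if_pos h

lemma paretoTail_of_lt (h : tmin < t) : paretoTail tmin β t = (tmin / t) ^ β := if_neg h.not_ge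

lemma paretoTail_nonneg (htmin : 0 ≤ tmin) : 0 ≤ paretoTail tmin β t := by
  rcases le_or_gt t tmin with h | h
  · simp [paretoTail_of_le h]
  · rw [paretoTail_of_lt h]
    exact Real.rpow_nonneg (div_nonneg htmin (htmin.trans h.le)) _

lemma paretoTail_le_one (htmin : 0 ≤ tmin) (hβ : 0 ≤ β) : paretoTail tmin β t ≤ 1 := by
  rcases le_or_gt t tmin with h | h
  · simp [paretoTail_of_le h]
  · rw [paretoTail_of_lt h]
    have ht : 0 < t := htmin.trans_lt h
    exact Real.rpow_le_one (div_nonneg htmin ht.le) ((div_le_one ht).2 h.le) hβ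

lemma paretoTail_pow (htmin : 0 ≤ tmin) (n : ℕ) :
    paretoTail tmin β t ^ n = paretoTail tmin (β * n) t := by
  rcases le_or_gt t tmin with h | h
  · simp [paretoTail_of_le h]
  · rw [paretoTail_of_lt h, paretoTail_of_lt h,
      Real.rpow_mul_natCast (div_nonneg htmin (htmin.trans h.le))]

lemma measurable_paretoTail : Measurable (paretoTail tmin β) :=
  Measurable.ite measurableSet_Iic measurable_const (by fun_prop)

lemma integrableOn_paretoTail (htmin : 0 < tmin) (hβ : 1 < β) :
    IntegrableOn (paretoTail tmin β) (Ioi 0) := by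
  rw [← Ioc_union_Ioi_eq_Ioi htmin.le]
  refine IntegrableOn.union ?_ ?_
  · refine (integrableOn_congr_fun (fun t ht => paretoTail_of_le ht.2) measurableSet_Ioc).2 ?_
    exact integrableOn_const measure_Ioc_lt_top.ne
  · refine (integrableOn_congr_fun (fun t ht => ?_) measurableSet_Ioi).2
      ((integrableOn_Ioi_rpow_of_lt (neg_lt_neg hβ) htmin).const_mul (tmin ^ β))
    rw [paretoTail_of_lt ht, div_rpow_eq_mul_rpow_neg htmin.le (htmin.trans ht).le]

end ParetoTail

section Probability

variable {Ω : Type*} [MeasurableSpace Ω] {μ : Measure Ω}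

lemma integral_eq_setIntegral_Ioi_of_measure_lt {Z : Ω → ℝ} {g : ℝ → ℝ} (hZ0 : 0 ≤ᵐ[μ] Z)
    (hZ : AEMeasurable Z μ) (hg : IntegrableOn g (Ioi 0)) (hg0 : ∀ t ∈ Ioi 0, 0 ≤ g t)
    (htail : ∀ t ∈ Ioi 0, μ {ω | t < Z ω} = ENNReal.ofReal (g t)) :
    ∫ ω, Z ω ∂μ = ∫ t in Ioi 0, g t := by
  rw [integral_eq_lintegral_of_nonneg_ae hZ0 hZ.aestronglyMeasurable,
    lintegral_eq_lintegral_meas_lt μ hZ0 hZ, setLIntegral_congr_fun measurableSet_Ioi htail,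
    ← ofReal_integral_eq_lintegral_ofReal hg ((ae_restrict_iff' measurableSet_Ioi).2
      (Filter.Eventually.of_forall hg0)),
    ENNReal.toReal_ofReal (setIntegral_nonneg measurableSet_Ioi hg0)]

lemma IsPareto.measure_lt {X : Ω → ℝ} {tmin β : ℝ} (h : IsPareto μ X tmin β) (htmin : tmin ≠ 0)
    (t : ℝ) : μ {ω | t < X ω} = ENNReal.ofReal (paretoTail tmin β t) := by
  rcases lt_or_ge t tmin with ht | ht
  · rw [h.2.2 t ht, paretoTail_of_le ht.le, ENNReal.ofReal_one]
  · rw [h.2.1 t ht]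
    rcases ht.eq_or_lt with rfl | ht
    · rw [paretoTail_of_le le_rfl, div_self htmin, Real.one_rpow]
    · rw [paretoTail_of_lt ht]

lemma IsPareto.prod_measure_lt {ι : Type*} [Fintype ι] {X : ι → Ω → ℝ} {tmin β : ℝ}
    (hX : ∀ k, IsPareto μ (X k) tmin β) (htmin : 0 < tmin) (t : ℝ) :
    ∏ k, μ {ω | t < X k ω} = ENNReal.ofReal (paretoTail tmin (β * Fintype.card ι) t) := by
  simp_rw [(hX _).measure_lt htmin.ne', Finset.prod_const, Finset.card_univ,
    ← ENNReal.ofReal_pow (paretoTail_nonneg htmin.le), paretoTail_pow htmin.le]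

lemma ProbabilityTheory.iIndepFun.measure_cons_lt {n : ℕ} {Y : Ω → ℝ} {X : Fin n → Ω → ℝ}
    (h : iIndepFun (Fin.cons Y X : Fin (n + 1) → Ω → ℝ) μ) (s t : ℝ) :
    μ {ω | s < Y ω ∧ ∀ k, t < X k ω} = μ {ω | s < Y ω} * ∏ k, μ {ω | t < X k ω} := by
  have := h.measure_inter_preimage_eq_mul Finset.univ
    (sets := Fin.cons (Ioi s) fun _ => Ioi t)
    (fun i _ => Fin.cases measurableSet_Ioi (fun _ => measurableSet_Ioi) i)
  simp only [Finset.mem_univ, iInter_true, Fin.prod_univ_succ, Fin.cons_zero, Fin.cons_succ] at this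
  refine (congrArg μ ?_).trans this
  ext ω
  simp [Fin.forall_fin_succ]

lemma measure_lt_min_sub_iInf {r : ℕ} (hr : 0 < r) {tmin β D τ : ℝ} {Y : Ω → ℝ}
    {X : Fin r → Ω → ℝ} (hindep : iIndepFun (Fin.cons Y X : Fin (r + 1) → Ω → ℝ) μ)
    (hY : IsPareto μ Y D β) (hX : ∀ k, IsPareto μ (X k) tmin β) (hD : 0 < D)
    (htmin : 0 < tmin) (t : ℝ) :
    μ {ω | t < min (Y ω - τ) (⨅ k, X k ω)}
      = ENNReal.ofReal (paretoTail D β (t + τ) * paretoTail tmin (β * r) t) := by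
  have : Nonempty (Fin r) := Fin.pos_iff_nonempty.mp hr
  have hset : {ω | t < min (Y ω - τ) (⨅ k, X k ω)} = {ω | t + τ < Y ω ∧ ∀ k, t < X k ω} := by
    ext ω
    simp only [mem_ofPred_eq, lt_min_iff, lt_ciInf_iff_of_finite, lt_sub_iff_add_lt]
  rw [hset, hindep.measure_cons_lt, hY.measure_lt hD.ne', IsPareto.prod_measure_lt hX htmin,
    Fintype.card_fin, ENNReal.ofReal_mul (paretoTail_nonneg hD.le)]

end Probability

section Residual

variable {D τ tmin β p : ℝ}

lemma integrableOn_residual_paretoTail (htmin : 0 < tmin) (hD : 0 ≤ D) (hβ : 0 ≤ β)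
    (hp : 1 < p) :
    IntegrableOn (fun t => paretoTail D β (t + τ) * paretoTail tmin p t) (Ioi 0) := by
  have hmeas : Measurable fun t => paretoTail D β (t + τ) * paretoTail tmin p t :=
    (measurable_paretoTail.comp (measurable_add_const τ)).mul measurable_paretoTail
  refine (integrableOn_paretoTail htmin hp).mono' hmeas.aestronglyMeasurable
    (Filter.Eventually.of_forall fun t => ?_)
  rw [Real.norm_of_nonneg (mul_nonneg (paretoTail_nonneg hD) (paretoTail_nonneg htmin.le))]
  exact mul_le_of_le_one_left (paretoTail_nonneg htmin.le) (paretoTail_le_one hD hβ)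

lemma integral_residual_paretoTail (htmin : 0 < tmin) (hD : 0 ≤ D) (hc : tmin ≤ D - τ)
    (hβ : 0 ≤ β) (hp : 1 < p) :
    ∫ t in Ioi 0, paretoTail D β (t + τ) * paretoTail tmin p t
      = tmin / (p - 1) - tmin ^ p / ((p - 1) * (D - τ) ^ (p - 1))
        + (∫ x in Ioi (D - τ), (D / (x + τ)) ^ β * (tmin / x) ^ p) + tmin := by
  have hint := integrableOn_residual_paretoTail (τ := τ) htmin hD hβ hp
  have hint' := hint.mono_set (Ioi_subset_Ioi htmin.le)
  rw [← Ioc_union_Ioi_eq_Ioi htmin.le, setIntegral_union (Ioc_disjoint_Ioi le_rfl)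
      measurableSet_Ioi (hint.mono_set Ioc_subset_Ioi_self) hint',
    ← Ioc_union_Ioi_eq_Ioi hc, setIntegral_union (Ioc_disjoint_Ioi le_rfl) measurableSet_Ioi
      (hint'.mono_set Ioc_subset_Ioi_self) (hint'.mono_set (Ioi_subset_Ioi hc))]
  have hbelow : ∫ t in Ioc 0 tmin, paretoTail D β (t + τ) * paretoTail tmin p t = tmin := by
    rw [setIntegral_congr_fun (g := fun _ => 1) measurableSet_Ioc fun t ht => by
      rw [paretoTail_of_le (by linarith [ht.2]), paretoTail_of_le ht.2, one_mul]]
    simp [htmin.le]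
  have hmiddle : ∫ t in Ioc tmin (D - τ), paretoTail D β (t + τ) * paretoTail tmin p t
      = ∫ t in Ioc tmin (D - τ), (tmin / t) ^ p :=
    setIntegral_congr_fun measurableSet_Ioc fun t ht => by
      rw [paretoTail_of_le (by linarith [ht.2]), paretoTail_of_lt ht.1, one_mul]
  have habove : ∫ t in Ioi (D - τ), paretoTail D β (t + τ) * paretoTail tmin p t
      = ∫ t in Ioi (D - τ), (D / (t + τ)) ^ β * (tmin / t) ^ p :=
    setIntegral_congr_fun measurableSet_Ioi fun t (ht : D - τ < t) => by
      rw [paretoTail_of_lt (by linarith), paretoTail_of_lt (by linarith)]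
  rw [hbelow, hmiddle, habove, integral_Ioc_div_rpow htmin hc hp.ne']
  ring

end Residual

/-- Eq. (restart16) in the paper's Theorem 4: with `Y` Pareto(`D`, `β`), the
residual law of the straggling original attempt, and `X 1, ..., X r` i.i.d. Pareto(`tmin`, `β`)
extra attempts, all mutually independent,
`E[min(Y − τ_est, X 1, ..., X r)] = tmin/(βr−1) − tmin^{βr}/((βr−1)(D−τ_est)^{βr−1})
  + ∫_{D−τ_est}^∞ (D/(ω+τ_est))^β (tmin/ω)^{βr} dω + tmin`. -/
theorem expected_min_restart
    {Ω : Type*} [MeasurableSpace Ω] (μ : Measure Ω) [IsProbabilityMeasure μ]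
    (r : ℕ) (hr : 1 ≤ r) (tmin β D τest : ℝ)
    (htmin : 0 < tmin) (hβ : 0 < β) (hβr : 1 < β * (r : ℝ)) (hτest : 0 ≤ τest)
    (h1 : tmin ≤ D - τest)
    (Y : Ω → ℝ) (X : Fin r → Ω → ℝ)
    (hindep : iIndepFun
      (Fin.cons Y X : Fin (r + 1) → Ω → ℝ) μ)
    (hY : IsPareto μ Y D β)
    (hX : ∀ k, IsPareto μ (X k) tmin β) :
    ∫ ω, min (Y ω - τest) (⨅ k, X k ω) ∂μ
      = tmin / (β * (r : ℝ) - 1)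
        - tmin ^ (β * (r : ℝ)) / ((β * (r : ℝ) - 1) * (D - τest) ^ (β * (r : ℝ) - 1))
        + (∫ x in Set.Ioi (D - τest), (D / (x + τest)) ^ β * (tmin / x) ^ (β * (r : ℝ)))
        + tmin := by
  have hD : 0 < D := by linarith
  have htail := measure_lt_min_sub_iInf hr hindep hY hX hD htmin (τ := τest)
  have hZ : Measurable fun ω => min (Y ω - τest) (⨅ k, X k ω) :=
    (hY.1.sub_const τest).min (Measurable.iInf fun k => (hX k).1)
  have hZ_pos : ∀ᵐ ω ∂μ, 0 < min (Y ω - τest) (⨅ k, X k ω) := by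
    rw [ae_iff_measure_eq (measurableSet_lt measurable_const hZ).nullMeasurableSet, htail,
      paretoTail_of_le (by linarith), paretoTail_of_le htmin.le, one_mul, ENNReal.ofReal_one,
      measure_univ]
  rw [integral_eq_setIntegral_Ioi_of_measure_lt (hZ_pos.mono fun _ h => h.le) hZ.aemeasurable
      (integrableOn_residual_paretoTail htmin hD.le hβ.le hβr)
      (fun t _ => mul_nonneg (paretoTail_nonneg hD.le) (paretoTail_nonneg htmin.le))
      (fun t _ => htail t),
    integral_residual_paretoTail htmin hD.le h1 hβ.le hβr]
end

section
/- Let N ≥ 1 and r ≥ 0 be integers, t_min > 0, β > 0, 0 ≤ φ < 1, 0 ≤ τ_est, and suppose t_min ≤ D and (1 − φ)·t_min ≤ D − τ_est ≤ D. For j = 1, ..., N let T_{j} and X_{j,1}, ..., X_{j,r+1} be mutually independent Pareto(t_min, β) random variables (independent across j as well). Say task j fails if T_{j} > D and (1 − φ)·X_{j,k} > D − τ_est for every k = 1, ..., r+1. Then the probability that no task fails equals (1 − (1 − φ)^{β·(r+1)}·t_min^{β·(r+2)}/(D^β · (D − τ_est)^{β·(r+1)}))^N. -/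
open MeasureTheory ProbabilityTheory Set

/-!
Grouping the independent family by task, the attempt vectors of different tasks are independent,
so the probability that no task fails is `∏ⱼ (1 - P(task j fails))`. Within a task the attempts
are independent too, so a task fails with probability
`P(T > D) · P((1 - φ) X > D - τ_est)^(r+1) = (t_min/D)^β · ((1 - φ) t_min/(D - τ_est))^(β(r+1))`;
both thresholds lie above `t_min`, where the Pareto tail formula applies.
-/

lemma ProbabilityTheory.iIndepFun.curry {Ω ι κ 𝓧 : Type*} [MeasurableSpace Ω]
    [MeasurableSpace 𝓧] {P : Measure Ω} [IsProbabilityMeasure P] {X : ι → κ → Ω → 𝓧}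
    (mX : ∀ i j, Measurable (X i j)) (h : iIndepFun (fun p : ι × κ ↦ X p.1 p.2) P) :
    iIndepFun (fun i ω j ↦ X i j ω) P := by
  have := fun i j ↦ Measure.isProbabilityMeasure_map (μ := P) (mX i j).aemeasurable
  have hjoint : P.map (fun ω (p : ι × κ) ↦ X p.1 p.2 ω)
      = Measure.infinitePi fun p : ι × κ ↦ P.map (X p.1 p.2) :=
    h.map_fun_eq_infinitePi_map fun p ↦ mX p.1 p.2
  have hrow (i : ι) : P.map (fun ω j ↦ X i j ω) = Measure.infinitePi fun j ↦ P.map (X i j) :=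
    (h.precomp (Prod.mk_right_injective i)).map_fun_eq_infinitePi_map (mX i)
  rw [iIndepFun_iff_map_fun_eq_infinitePi_map fun i ↦ measurable_pi_lambda _ (mX i)]
  calc P.map (fun ω i j ↦ X i j ω)
      = (P.map fun ω (p : ι × κ) ↦ X p.1 p.2 ω).map (MeasurableEquiv.curry ι κ 𝓧) :=
        (Measure.map_map (MeasurableEquiv.curry ι κ 𝓧).measurable
          (measurable_pi_lambda _ fun p ↦ mX p.1 p.2)).symm
    _ = Measure.infinitePi fun i ↦ Measure.infinitePi fun j ↦ P.map (X i j) := by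
        rw [hjoint, Measure.infinitePi_map_curry fun i j ↦ P.map (X i j)]
    _ = Measure.infinitePi fun i ↦ P.map (fun ω j ↦ X i j ω) := by simp_rw [hrow]

lemma ProbabilityTheory.iIndepFun.measure_iInter_preimage_compl {Ω ι 𝓧 : Type*}
    [MeasurableSpace Ω] [MeasurableSpace 𝓧] [Fintype ι] {μ : Measure Ω}
    [IsProbabilityMeasure μ] {Y : ι → Ω → 𝓧} (hY : iIndepFun Y μ) (mY : ∀ i, Measurable (Y i))
    {F : Set 𝓧} (hF : MeasurableSet F) :
    μ (⋂ i, Y i ⁻¹' Fᶜ) = ∏ i, (1 - μ (Y i ⁻¹' F)) := by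
  rw [hY.meas_iInter fun i ↦ ⟨Fᶜ, hF.compl, rfl⟩]
  exact Finset.prod_congr rfl fun i _ ↦ prob_compl_eq_one_sub (mY i hF)

lemma IsPareto.measure_lt_const_mul {Ω : Type*} [MeasurableSpace Ω] {μ : Measure Ω}
    {X : Ω → ℝ} {tmin β a s : ℝ} (hX : IsPareto μ X tmin β) (ha : 0 < a) (hs : a * tmin ≤ s) :
    μ {ω | s < a * X ω} = ENNReal.ofReal ((a * tmin / s) ^ β) := by
  have hset : {ω | s < a * X ω} = {ω | s / a < X ω} := by
    ext ω; simp only [mem_ofPred_eq, div_lt_iff₀' ha]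
  rw [hset, hX.2.1 _ ((le_div_iff₀' ha).2 hs), div_div_eq_mul_div, mul_comm tmin]

lemma div_rpow_mul_pow_eq {t D a E β : ℝ} (ht : 0 < t) (hD : 0 ≤ D) (ha : 0 ≤ a) (hE : 0 ≤ E)
    (n : ℕ) :
    (t / D) ^ β * ((a * t / E) ^ β) ^ n
      = a ^ (β * n) * t ^ (β * (n + 1)) / (D ^ β * E ^ (β * n)) := by
  rw [Real.div_rpow ht.le hD, Real.div_rpow (by positivity) hE, Real.mul_rpow ha ht.le, div_pow,
    mul_pow, ← Real.rpow_mul_natCast ha, ← Real.rpow_mul_natCast ht.le,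
    ← Real.rpow_mul_natCast hE, mul_add_one, Real.rpow_add ht]
  ring

lemma IsPareto.measure_lt_and_forall_lt_const_mul {Ω : Type*} [MeasurableSpace Ω]
    {μ : Measure Ω} {n : ℕ} {T : Ω → ℝ} {X : Fin n → Ω → ℝ} {tmin β D a s : ℝ}
    (hT : IsPareto μ T tmin β) (hX : ∀ k, IsPareto μ (X k) tmin β)
    (hind : iIndepFun (Fin.cons T X : Fin (n + 1) → Ω → ℝ) μ) (htmin : 0 < tmin)
    (hD : tmin ≤ D) (ha : 0 < a) (hs : a * tmin ≤ s) :
    μ {ω | D < T ω ∧ ∀ k, s < a * X k ω}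
      = ENNReal.ofReal ((tmin / D) ^ β * ((a * tmin / s) ^ β) ^ n) := by
  let S : Fin (n + 1) → Set ℝ := Fin.cons (Ioi D) fun _ ↦ {x | s < a * x}
  have hS (k : Fin (n + 1)) : MeasurableSet (S k) :=
    Fin.cases measurableSet_Ioi (fun _ ↦ measurableSet_lt measurable_const (by fun_prop)) k
  have hset : {ω | D < T ω ∧ ∀ k, s < a * X k ω}
      = ⋂ k, (Fin.cons T X : Fin (n + 1) → Ω → ℝ) k ⁻¹' S k := by
    ext ω; simp [S, Fin.forall_fin_succ]
  have hXk (k : Fin n) : μ (X k ⁻¹' {x | s < a * x}) = ENNReal.ofReal ((a * tmin / s) ^ β) :=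
    (hX k).measure_lt_const_mul ha hs
  have hT0 : μ (T ⁻¹' Ioi D) = ENNReal.ofReal ((tmin / D) ^ β) := hT.2.1 D hD
  have hD0 : 0 < D := htmin.trans_le hD
  have hs0 : 0 < s := (mul_pos ha htmin).trans_le hs
  rw [hset, hind.meas_iInter fun k ↦ ⟨S k, hS k, rfl⟩, Fin.prod_univ_succ]
  simp only [Fin.cons_zero, Fin.cons_succ, S, hT0, hXk, Finset.prod_const, Finset.card_univ,
    Fintype.card_fin]
  rw [← ENNReal.ofReal_pow (by positivity), ← ENNReal.ofReal_mul (by positivity)]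

theorem pocd_speculative_resume_general
    {Ω : Type*} [MeasurableSpace Ω] (μ : Measure Ω) [IsProbabilityMeasure μ]
    (N r : ℕ) (hN : 1 ≤ N) (tmin β D τest φ : ℝ)
    (htmin : 0 < tmin) (hφ1 : φ < 1)
    (hD : tmin ≤ D) (h1 : (1 - φ) * tmin ≤ D - τest)
    (T : Fin N → Ω → ℝ) (X : Fin N → Fin (r + 1) → Ω → ℝ)
    (hindep : iIndepFun
      (fun p : Fin N × Fin (r + 2) =>
        (Fin.cons (T p.1) (X p.1) : Fin (r + 2) → Ω → ℝ) p.2) μ)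
    (hT : ∀ j, IsPareto μ (T j) tmin β)
    (hX : ∀ j k, IsPareto μ (X j k) tmin β) :
    μ {ω | ∀ j, ¬ (D < T j ω ∧ ∀ k, D - τest < (1 - φ) * X j k ω)}
      = ENNReal.ofReal
          ((1 - (1 - φ) ^ (β * (r + 1 : ℝ)) * tmin ^ (β * (r + 2 : ℝ))
              / (D ^ β * (D - τest) ^ (β * (r + 1 : ℝ)))) ^ N) := by
  have hφ : 0 < 1 - φ := sub_pos.2 hφ1
  have hD0 : 0 < D := htmin.trans_le hD
  have hDτ : 0 < D - τest := (mul_pos hφ htmin).trans_le h1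
  let Y : Fin N → Ω → Fin (r + 2) → ℝ := fun j ω k ↦
    (Fin.cons (T j) (X j) : Fin (r + 2) → Ω → ℝ) k ω
  have hY (j : Fin N) : Measurable (Y j) :=
    measurable_pi_iff.2 (Fin.cases (hT j).1 fun k ↦ (hX j k).1)
  let F : Set (Fin (r + 2) → ℝ) :=
    {v | D < v 0 ∧ ∀ k : Fin (r + 1), D - τest < (1 - φ) * v k.succ}
  have hF : MeasurableSet F := by measurability
  set q := (tmin / D) ^ β * (((1 - φ) * tmin / (D - τest)) ^ β) ^ (r + 1) with hq_def
  have hfail (j : Fin N) : μ (Y j ⁻¹' F) = ENNReal.ofReal q :=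
    (hT j).measure_lt_and_forall_lt_const_mul (hX j)
      (hindep.precomp (g := Prod.mk j) (Prod.mk_right_injective j)) htmin hD hφ h1
  have hq1 : q ≤ 1 := ENNReal.ofReal_le_one.1 (hfail ⟨0, hN⟩ ▸ prob_le_one)
  have hq : q = (1 - φ) ^ (β * (r + 1 : ℝ)) * tmin ^ (β * (r + 2 : ℝ))
      / (D ^ β * (D - τest) ^ (β * (r + 1 : ℝ))) := by
    rw [hq_def, div_rpow_mul_pow_eq htmin hD0.le hφ.le hDτ.le (r + 1)]
    push_cast
    ring_nf
  have hset : {ω | ∀ j, ¬ (D < T j ω ∧ ∀ k, D - τest < (1 - φ) * X j k ω)}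
      = ⋂ j, Y j ⁻¹' Fᶜ := by
    ext ω; simp [Y, F]
  have htasks : iIndepFun Y μ := iIndepFun.curry (fun j ↦ measurable_pi_iff.1 (hY j)) hindep
  rw [hset, htasks.measure_iInter_preimage_compl hY hF]
  simp_rw [hfail]
  rw [Finset.prod_const, Finset.card_univ, Fintype.card_fin, ← ENNReal.ofReal_one,
    ← ENNReal.ofReal_sub _ (by positivity), ← ENNReal.ofReal_pow (sub_nonneg.2 hq1), hq]

/-- paper's Theorem 5, PoCD of Speculative-Resume: task `j` fails iff its
original attempt `T j` exceeds `D` and each of the `r+1` resumed attempts, which take time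
`(1−φ)·X j k`, exceeds `D − τ_est`; the probability that no task fails is
`(1 − (1−φ)^{β(r+1)}·tmin^{β(r+2)}/(D^β (D−τ_est)^{β(r+1)}))^N`. -/
theorem pocd_speculative_resume
    {Ω : Type*} [MeasurableSpace Ω] (μ : Measure Ω) [IsProbabilityMeasure μ]
    (N r : ℕ) (hN : 1 ≤ N) (tmin β D τest φ : ℝ)
    (htmin : 0 < tmin) (hβ : 0 < β) (hφ0 : 0 ≤ φ) (hφ1 : φ < 1) (hτest : 0 ≤ τest)
    (hD : tmin ≤ D) (h1 : (1 - φ) * tmin ≤ D - τest) (h2 : D - τest ≤ D)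
    (T : Fin N → Ω → ℝ) (X : Fin N → Fin (r + 1) → Ω → ℝ)
    (hindep : iIndepFun
      (fun p : Fin N × Fin (r + 2) =>
        (Fin.cons (T p.1) (X p.1) : Fin (r + 2) → Ω → ℝ) p.2) μ)
    (hT : ∀ j, IsPareto μ (T j) tmin β)
    (hX : ∀ j k, IsPareto μ (X j k) tmin β) :
    μ {ω | ∀ j, ¬ (D < T j ω ∧ ∀ k, D - τest < (1 - φ) * X j k ω)}
      = ENNReal.ofReal
          ((1 - (1 - φ) ^ (β * (r + 1 : ℝ)) * tmin ^ (β * (r + 2 : ℝ))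
              / (D ^ β * (D - τest) ^ (β * (r + 1 : ℝ)))) ^ N) :=
  pocd_speculative_resume_general μ N r hN tmin β D τest φ htmin hφ1 hD h1 T X hindep hT hX
end

section
/- Let β > 0, β ≠ 1, t_min > 0, D > t_min, 0 ≤ τ_est ≤ τ_kill, 0 ≤ φ < 1, and let r ≥ 0 be an integer with β·(r+1) > 1. Let T, X_1, ..., X_{r+1} be mutually independent Pareto(t_min, β) random variables. Define the random variable M = T on the event {T ≤ D}, and M = τ_est + r·(τ_kill − τ_est) + max(t_min, (1 − φ)·min(X_1, ..., X_{r+1})) on the event {T > D}. Then E[M] = E1·(1 − (t_min/D)^β) + (t_min/D)^β·( τ_est + r·(τ_kill − τ_est) + t_min·(1 − φ)^{β·(r+1)}/(β·(r+1) − 1) + t_min ), where E1 = t_min·D·β·(t_min^{β−1} − D^{β−1})/((1 − β)·(D^β − t_min^β)). -/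
/-!
Split the machine time as `M = min(T, D) + 1{T > D} · (c + Z − D)`, where `c` is the cost of the
killed attempts and `Z = max(tmin, (1 − φ) · min_k X_k)` is the running time of the fastest
resumed attempt. The indicator is a function of `T` and `Z` a function of the `X_k`, so the
expectation of the product factors. The remaining expectations come from the tail formula
`E[W] = ∫₀^∞ P(W > t) dt`: `P(min(T, D) > t)` is the Pareto tail cut off at `D`, and, since the
minimum of independent Pareto variables is Pareto with the exponents added,
`P(Z > t) = ((1 − φ) tmin / t)^(β(r+1))` above the floor `tmin`.
-/

open MeasureTheory ProbabilityTheory Set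

lemma div_rpow_eq_mul_rpow_neg_s10 {s t b : ℝ} (hs : 0 ≤ s) (ht : 0 < t) :
    (s / t) ^ b = s ^ b * t ^ (-b) := by
  rw [Real.div_rpow hs ht.le, Real.rpow_neg ht.le, div_eq_mul_inv]

lemma integrableOn_Ioi_div_rpow {s m b : ℝ} (hs : 0 ≤ s) (hm : 0 < m) (hb : 1 < b) :
    IntegrableOn (fun t => (s / t) ^ b) (Ioi m) :=
  IntegrableOn.congr_fun ((integrableOn_Ioi_rpow_of_lt (neg_lt_neg hb) hm).const_mul (s ^ b))
    (fun _ ht => (div_rpow_eq_mul_rpow_neg_s10 hs (hm.trans ht)).symm) measurableSet_Ioi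

lemma integral_Ioi_div_rpow {s m b : ℝ} (hs : 0 ≤ s) (hm : 0 < m) (hb : 1 < b) :
    ∫ t in Ioi m, (s / t) ^ b = s ^ b * m ^ (1 - b) / (b - 1) := by
  rw [setIntegral_congr_fun measurableSet_Ioi
      (fun t ht => div_rpow_eq_mul_rpow_neg_s10 hs (hm.trans ht)),
    integral_const_mul, integral_Ioi_rpow_of_lt (neg_lt_neg hb) hm,
    show -b + 1 = 1 - b by ring, show (1:ℝ) - b = -(b - 1) by ring]
  field_simp

lemma integral_div_rpow {s m D b : ℝ} (hs : 0 ≤ s) (hm : 0 < m) (hmD : m ≤ D) (hb : b ≠ 1) :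
    ∫ t in m..D, (s / t) ^ b = s ^ b * (D ^ (1 - b) - m ^ (1 - b)) / (1 - b) := by
  have hpos : ∀ t ∈ uIcc m D, 0 < t := fun t ht => hm.trans_le (uIcc_of_le hmD ▸ ht).1
  rw [intervalIntegral.integral_congr fun t ht => div_rpow_eq_mul_rpow_neg_s10 hs (hpos t ht),
    intervalIntegral.integral_const_mul,
    integral_rpow (Or.inr ⟨fun h => hb (by linarith), fun h => (hpos 0 h).false⟩),
    show -b + 1 = 1 - b by ring, mul_div_assoc]

lemma ite_le_eq_min_add_indicator_mul_sub (t D w : ℝ) :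
    (if t ≤ D then t else w) = min t D + (Ioi D).indicator 1 t * (w - D) := by
  split_ifs with h
  · simp [h, not_lt.2 h]
  · simp [min_eq_right (not_le.1 h).le, not_le.1 h]

/-- `E[T; T ≤ D] = E[min(T, D)] − D · P(T > D)`, put in the paper's form `E1 · P(T ≤ D)`. -/
lemma truncated_pareto_mean_eq {tmin D β : ℝ} (htmin : 0 < tmin) (hD : tmin < D) (hβ : 0 < β)
    (hβ1 : β ≠ 1) :
    tmin + tmin ^ β * (D ^ (1 - β) - tmin ^ (1 - β)) / (1 - β) - D * (tmin / D) ^ β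
      = tmin * D * β * (tmin ^ (β - 1) - D ^ (β - 1)) / ((1 - β) * (D ^ β - tmin ^ β))
          * (1 - (tmin / D) ^ β) := by
  have hD0 : 0 < D := htmin.trans hD
  have hpow : tmin ^ β < D ^ β := Real.rpow_lt_rpow htmin.le hD hβ
  rw [Real.div_rpow htmin.le hD0.le, Real.rpow_sub htmin, Real.rpow_sub hD0, Real.rpow_sub htmin,
    Real.rpow_sub hD0, Real.rpow_one, Real.rpow_one]
  have hβ1' : 1 - β ≠ 0 := sub_ne_zero.2 (Ne.symm hβ1)
  have hne : D ^ β - tmin ^ β ≠ 0 := sub_ne_zero.2 hpow.ne'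
  have htβ : 0 < tmin ^ β := Real.rpow_pos_of_pos htmin β
  have hDβ : 0 < D ^ β := Real.rpow_pos_of_pos hD0 β
  generalize tmin ^ β = A at *
  generalize D ^ β = B at *
  field_simp
  ring

section

variable {Ω : Type*} [MeasurableSpace Ω] {μ : Measure Ω}

lemma integrable_of_integrableOn_meas_lt [IsFiniteMeasure μ] {W : Ω → ℝ} (hW : AEMeasurable W μ)
    (hnn : 0 ≤ᵐ[μ] W) (htail : IntegrableOn (fun t => μ.real {ω | t < W ω}) (Ioi 0)) :
    Integrable W μ := by
  refine ⟨hW.aestronglyMeasurable, ?_⟩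
  rw [hasFiniteIntegral_iff_ofReal hnn, lintegral_eq_lintegral_meas_lt μ hnn hW]
  simpa only [ofReal_measureReal (measure_ne_top μ _)] using htail.lintegral_lt_top

lemma integral_eq_add_integral_Ioi_meas_lt [IsProbabilityMeasure μ] {W : Ω → ℝ} {m : ℝ}
    (hm : 0 < m) (hW : AEMeasurable W μ) (hfloor : ∀ t < m, μ {ω | t < W ω} = 1)
    (htail : IntegrableOn (fun t => μ.real {ω | t < W ω}) (Ioi m)) :
    Integrable W μ ∧ ∫ ω, W ω ∂μ = m + ∫ t in Ioi m, μ.real {ω | t < W ω} := by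
  have hnn : 0 ≤ᵐ[μ] W := by
    have : ∀ᵐ ω ∂μ, 0 < W ω :=
      (mem_ae_iff_prob_eq_one₀ (nullMeasurableSet_lt aemeasurable_const hW)).2 (hfloor 0 hm)
    filter_upwards [this] with ω hω using hω.le
  have hfloorOn : EqOn (fun t => μ.real {ω | t < W ω}) 1 (Ioo 0 m) := fun t ht => by
    simp [measureReal_def, hfloor t ht.2]
  have hsplit : Ioo 0 m ∪ Ici m = Ioi 0 := Ioo_union_Ici_eq_Ioi hm
  have hint_floor : IntegrableOn (fun t => μ.real {ω | t < W ω}) (Ioo 0 m) :=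
    (integrableOn_const measure_Ioo_lt_top.ne).congr_fun hfloorOn.symm measurableSet_Ioo
  have hint_tail : IntegrableOn (fun t => μ.real {ω | t < W ω}) (Ici m) :=
    (integrableOn_Ici_iff_integrableOn_Ioi).2 htail
  have hint : Integrable W μ :=
    integrable_of_integrableOn_meas_lt hW hnn (hsplit ▸ hint_floor.union hint_tail)
  refine ⟨hint, ?_⟩
  rw [hint.integral_eq_integral_meas_lt hnn, ← hsplit,
    setIntegral_union ((Iio_disjoint_Ici le_rfl).mono_left Ioo_subset_Iio_self)
      measurableSet_Ici hint_floor hint_tail, setIntegral_congr_fun measurableSet_Ioo hfloorOn,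
    integral_Ici_eq_integral_Ioi]
  simp [hm.le]

lemma ProbabilityTheory.iIndepFun.indepFun_cons {E : Type*} [MeasurableSpace E] {n : ℕ}
    {Y : Ω → E} {X : Fin n → Ω → E}
    (h : iIndepFun (Fin.cons Y X : Fin (n + 1) → Ω → E) μ)
    (hY : Measurable Y) (hX : ∀ k, Measurable (X k)) :
    IndepFun Y (fun ω k => X k ω) μ := by
  have hsplit := h.indepFun_finset {0} (Finset.univ.map (Fin.succEmb n))
    (by simp [Fin.succ_ne_zero]) (Fin.cases hY hX)
  have hsucc : ∀ k : Fin n, k.succ ∈ Finset.univ.map (Fin.succEmb n) := by simp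
  exact hsplit.comp (measurable_pi_apply ⟨0, Finset.mem_singleton_self 0⟩)
    (measurable_pi_lambda _ fun k => measurable_pi_apply ⟨k.succ, hsucc k⟩)

lemma ProbabilityTheory.IndepFun.integral_indicator_comp_mul [IsFiniteMeasure μ]
    {α β : Type*} [MeasurableSpace α] [MeasurableSpace β] {Y : Ω → α} {V : Ω → β}
    (h : IndepFun Y V μ) (hY : Measurable Y) {s : Set α} (hs : MeasurableSet s) {g : β → ℝ}
    (hg : Measurable g) (hgV : Integrable (fun ω => g (V ω)) μ) :
    Integrable (fun ω => s.indicator 1 (Y ω) * g (V ω)) μ ∧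
      ∫ ω, s.indicator 1 (Y ω) * g (V ω) ∂μ = μ.real (Y ⁻¹' s) * ∫ ω, g (V ω) ∂μ := by
  have hind : IndepFun (fun ω => s.indicator (1 : α → ℝ) (Y ω)) (fun ω => g (V ω)) μ :=
    h.comp (measurable_one.indicator hs) hg
  have hint : Integrable (fun ω => s.indicator (1 : α → ℝ) (Y ω)) μ :=
    (integrable_const (1 : ℝ)).indicator (hY hs)
  refine ⟨hind.integrable_mul hint hgV, ?_⟩
  rw [hind.integral_fun_mul_eq_mul_integral hint.1 hgV.1]
  congr
  exact integral_indicator_one (hY hs)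

namespace IsPareto

variable {X : Ω → ℝ} {tmin β : ℝ}

lemma measureReal_lt (hX : IsPareto μ X tmin β) (htmin : 0 ≤ tmin) {t : ℝ} (ht : tmin ≤ t) :
    μ.real {ω | t < X ω} = (tmin / t) ^ β := by
  rw [measureReal_def, hX.2.1 t ht,
    ENNReal.toReal_ofReal (Real.rpow_nonneg (div_nonneg htmin (htmin.trans ht)) β)]

lemma const_mul (hX : IsPareto μ X tmin β) {a : ℝ} (ha : 0 < a) :
    IsPareto μ (fun ω => a * X ω) (a * tmin) β := by
  have hset : ∀ t, {ω | t < a * X ω} = {ω | t / a < X ω} := fun t => by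
    ext ω; simp [div_lt_iff₀' ha]
  refine ⟨hX.1.const_mul a, fun t ht => ?_, fun t ht => ?_⟩
  · rw [hset, hX.2.1 _ ((le_div_iff₀' ha).2 ht), div_div_eq_mul_div, mul_comm tmin]
  · rw [hset, hX.2.2 _ ((div_lt_iff₀' ha).2 ht)]

lemma iInf {ι : Type*} [Fintype ι] [Nonempty ι] {X : ι → Ω → ℝ}
    (hX : ∀ i, IsPareto μ (X i) tmin β) (hind : iIndepFun X μ) (htmin : 0 ≤ tmin) :
    IsPareto μ (fun ω => ⨅ i, X i ω) tmin (Fintype.card ι * β) := by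
  have hprod : ∀ t, μ {ω | t < ⨅ i, X i ω} = ∏ i, μ {ω | t < X i ω} := fun t => by
    have : {ω | t < ⨅ i, X i ω} = ⋂ i, X i ⁻¹' Ioi t := by
      ext ω; simp [← Finset.inf'_univ_eq_ciInf, Finset.lt_inf'_iff]
    rw [this]
    exact hind.meas_iInter fun i => ⟨Ioi t, measurableSet_Ioi, rfl⟩
  refine ⟨Measurable.iInf fun i => (hX i).1, fun t ht => ?_, fun t ht => ?_⟩
  · have hbase : 0 ≤ tmin / t := div_nonneg htmin (htmin.trans ht)
    simp only [hprod, fun i => (hX i).2.1 t ht, Finset.prod_const, Finset.card_univ]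
    rw [← ENNReal.ofReal_pow (Real.rpow_nonneg hbase β), ← Real.rpow_natCast,
      ← Real.rpow_mul hbase, mul_comm]
  · simp [hprod, fun i => (hX i).2.2 t ht]

variable [IsProbabilityMeasure μ]

lemma integral_max (hX : IsPareto μ X tmin β) {a : ℝ} (htmin : 0 ≤ tmin) (ha : tmin ≤ a)
    (ha0 : 0 < a) (hβ : 1 < β) :
    Integrable (fun ω => max a (X ω)) μ ∧
      ∫ ω, max a (X ω) ∂μ = a + tmin ^ β * a ^ (1 - β) / (β - 1) := by
  have hfloor : ∀ t < a, μ {ω | t < max a (X ω)} = 1 := fun t ht => by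
    simp [ht]
  have htail :
      EqOn (fun t => μ.real {ω | t < max a (X ω)}) (fun t => (tmin / t) ^ β) (Ioi a) :=
    fun t (ht : a < t) => by
      simpa [not_lt.2 ht.le] using hX.measureReal_lt htmin (ha.trans ht.le)
  obtain ⟨hint, heq⟩ := integral_eq_add_integral_Ioi_meas_lt ha0
    (measurable_const.max hX.1).aemeasurable hfloor
    ((integrableOn_Ioi_div_rpow htmin ha0 hβ).congr_fun htail.symm measurableSet_Ioi)
  rw [heq, setIntegral_congr_fun measurableSet_Ioi htail, integral_Ioi_div_rpow htmin ha0 hβ]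
  exact ⟨hint, rfl⟩

lemma integral_max_const_mul (hX : IsPareto μ X tmin β) {a : ℝ} (htmin : 0 < tmin) (ha0 : 0 < a)
    (ha1 : a ≤ 1) (hβ : 1 < β) :
    Integrable (fun ω => max tmin (a * X ω)) μ ∧
      ∫ ω, max tmin (a * X ω) ∂μ = tmin + tmin * a ^ β / (β - 1) := by
  obtain ⟨hint, heq⟩ := (hX.const_mul ha0).integral_max (by positivity)
    (mul_le_of_le_one_left htmin.le ha1) htmin hβ
  rw [heq, Real.mul_rpow ha0.le htmin.le, mul_assoc, ← Real.rpow_add htmin, add_sub_cancel,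
    Real.rpow_one, mul_comm]
  exact ⟨hint, rfl⟩

lemma integral_min (hX : IsPareto μ X tmin β) {D : ℝ} (htmin : 0 < tmin) (hD : tmin < D)
    (hβ : β ≠ 1) :
    Integrable (fun ω => min (X ω) D) μ ∧
      ∫ ω, min (X ω) D ∂μ = tmin + tmin ^ β * (D ^ (1 - β) - tmin ^ (1 - β)) / (1 - β) := by
  have hfloor : ∀ t < tmin, μ {ω | t < min (X ω) D} = 1 := fun t ht => by
    simpa [ht.trans hD] using hX.2.2 t ht
  have htail : EqOn (fun t => μ.real {ω | t < min (X ω) D})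
      ((Iio D).indicator fun t => (tmin / t) ^ β) (Ioi tmin) := fun t ht => by
    by_cases htD : t < D
    · simpa [htD] using hX.measureReal_lt htmin.le ht.le
    · simp [htD]
  have hcont : ContinuousOn (fun t => (tmin / t) ^ β) (Icc tmin D) :=
    (continuousOn_const.div continuousOn_id fun t ht => (htmin.trans_le ht.1).ne').rpow_const
      fun t ht => Or.inl (div_pos htmin (htmin.trans_le ht.1)).ne'
  have hint : IntegrableOn ((Iio D).indicator fun t => (tmin / t) ^ β) (Ioi tmin) := by
    rw [integrableOn_indicator_iff measurableSet_Iio, Iio_inter_Ioi]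
    exact hcont.integrableOn_Icc.mono_set Ioo_subset_Icc_self
  obtain ⟨hint, heq⟩ := integral_eq_add_integral_Ioi_meas_lt htmin
    (hX.1.min measurable_const).aemeasurable hfloor (hint.congr_fun htail.symm measurableSet_Ioi)
  rw [heq, setIntegral_congr_fun measurableSet_Ioi htail, setIntegral_indicator measurableSet_Iio,
    Ioi_inter_Iio, ← integral_Ioc_eq_integral_Ioo, ← intervalIntegral.integral_of_le hD.le,
    integral_div_rpow htmin.le htmin hD.le hβ]
  exact ⟨hint, rfl⟩

end IsPareto

end

theorem expected_time_speculative_resume_general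
    {Ω : Type*} [MeasurableSpace Ω] (μ : Measure Ω) [IsProbabilityMeasure μ]
    (r : ℕ) (tmin β D τest τkill φ : ℝ)
    (htmin : 0 < tmin) (hβ : 0 < β) (hβ1 : β ≠ 1) (hD : tmin < D)
    (hφ0 : 0 ≤ φ) (hφ1 : φ < 1)
    (hβr : 1 < β * (r + 1 : ℝ))
    (T : Ω → ℝ) (X : Fin (r + 1) → Ω → ℝ)
    (hindep : iIndepFun
      (Fin.cons T X : Fin (r + 2) → Ω → ℝ) μ)
    (hT : IsPareto μ T tmin β)
    (hX : ∀ k, IsPareto μ (X k) tmin β)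
    (M : Ω → ℝ)
    (hM : ∀ ω, M ω = if T ω ≤ D then T ω
      else τest + (r : ℝ) * (τkill - τest) + max tmin ((1 - φ) * ⨅ k, X k ω)) :
    ∫ ω, M ω ∂μ
      = (tmin * D * β * (tmin ^ (β - 1) - D ^ (β - 1))
            / ((1 - β) * (D ^ β - tmin ^ β))) * (1 - (tmin / D) ^ β)
        + (tmin / D) ^ β * (τest + (r : ℝ) * (τkill - τest)
            + tmin * (1 - φ) ^ (β * (r + 1 : ℝ)) / (β * (r + 1 : ℝ) - 1) + tmin) := by
  set c := τest + (r : ℝ) * (τkill - τest)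
  set Z : Ω → ℝ := fun ω => max tmin ((1 - φ) * ⨅ k, X k ω)
  have hY : IsPareto μ (fun ω => ⨅ k, X k ω) tmin (β * (r + 1 : ℝ)) := by
    have hXind : iIndepFun X μ := by simpa using hindep.precomp (Fin.succ_injective (r + 1))
    simpa [mul_comm] using IsPareto.iInf hX hXind htmin.le
  obtain ⟨hZint, hZ⟩ := hY.integral_max_const_mul htmin (sub_pos.2 hφ1) (by linarith) hβr
  obtain ⟨hTDint, hTD⟩ := hT.integral_min htmin hD hβ1
  have hWint : Integrable (fun ω => c + Z ω - D) μ :=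
    ((integrable_const c).add hZint).sub (integrable_const D)
  have hW : ∫ ω, c + Z ω - D ∂μ = c + ∫ ω, Z ω ∂μ - D := by
    simp [integral_sub, integral_add, hZint, Z]
  obtain ⟨hprodint, hprod⟩ :=
    (hindep.indepFun_cons hT.1 fun k => (hX k).1).integral_indicator_comp_mul hT.1
      measurableSet_Ioi (g := fun x => c + max tmin ((1 - φ) * ⨅ k, x k) - D) (by fun_prop) hWint
  have hPD : μ.real (T ⁻¹' Ioi D) = (tmin / D) ^ β := hT.measureReal_lt htmin.le hD.le
  have hdecomp : ∀ ω, M ω = min (T ω) D + (Ioi D).indicator 1 (T ω) * (c + Z ω - D) :=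
    fun ω => (hM ω).trans (ite_le_eq_min_add_indicator_mul_sub _ _ _)
  rw [integral_congr_ae (.of_forall hdecomp), integral_add hTDint hprodint, hprod, hPD, hW, hZ, hTD,
    ← truncated_pareto_mean_eq htmin hD hβ hβ1]
  ring

/-- paper's Theorem 6, expected machine running time per task under
Speculative-Resume: the machine time `M` equals `T` if `T ≤ D`, and otherwise
`τ_est + r·(τ_kill − τ_est) + max(tmin, (1−φ)·min(X₁, ..., X_{r+1}))`; then
`E[M] = E1·(1 − (tmin/D)^β) + (tmin/D)^β·(τ_est + r·(τ_kill − τ_est)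
  + tmin·(1−φ)^{β(r+1)}/(β(r+1) − 1) + tmin)`. -/
theorem expected_time_speculative_resume
    {Ω : Type*} [MeasurableSpace Ω] (μ : Measure Ω) [IsProbabilityMeasure μ]
    (r : ℕ) (tmin β D τest τkill φ : ℝ)
    (htmin : 0 < tmin) (hβ : 0 < β) (hβ1 : β ≠ 1) (hD : tmin < D)
    (hτest : 0 ≤ τest) (hτ : τest ≤ τkill) (hφ0 : 0 ≤ φ) (hφ1 : φ < 1)
    (hβr : 1 < β * (r + 1 : ℝ))
    (T : Ω → ℝ) (X : Fin (r + 1) → Ω → ℝ)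
    (hindep : iIndepFun
      (Fin.cons T X : Fin (r + 2) → Ω → ℝ) μ)
    (hT : IsPareto μ T tmin β)
    (hX : ∀ k, IsPareto μ (X k) tmin β)
    (M : Ω → ℝ)
    (hM : ∀ ω, M ω = if T ω ≤ D then T ω
      else τest + (r : ℝ) * (τkill - τest) + max tmin ((1 - φ) * ⨅ k, X k ω)) :
    ∫ ω, M ω ∂μ
      = (tmin * D * β * (tmin ^ (β - 1) - D ^ (β - 1))
            / ((1 - β) * (D ^ β - tmin ^ β))) * (1 - (tmin / D) ^ β)
        + (tmin / D) ^ β * (τest + (r : ℝ) * (τkill - τest)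
            + tmin * (1 - φ) ^ (β * (r + 1 : ℝ)) / (β * (r + 1 : ℝ) - 1) + tmin) :=
  expected_time_speculative_resume_general μ r tmin β D τest τkill φ htmin hβ hβ1 hD hφ0 hφ1 hβr T X
    hindep hT hX M hM
end
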